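/- Let U and V be jointly defined random variables, each distributed as a sum of independent Bernoulli random variables, with E[U] ≤ E[V]. Then P(V ≤ U) ≤ 2·exp( −(√E[V] − √E[U])² / (1+√2) ). -/

import Mathlib

open scoped ENNReal BigOperators
open Filter Asymptotics

namespace ARW

variable {V : Type} [Fintype V] [DecidableEq V]

/-- A sub-stochastic matrix: every row sums to at most `1`. -/
def SubStochastic (K : V → V → ℝ≥0∞) : Prop := ∀ x, ∑ y, K x y ≤ 1

/-- Non-degenerate: no principal sub-matrix of `K` is stochastic. -/
def NonDegenerate (K : V → V → ℝ≥0∞) : Prop :=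
  ∀ S : Finset V, S.Nonempty → ∃ x ∈ S, ∑ y ∈ S, K x y ≠ 1

/-- A probability vector on `V`. -/
def IsProbVec (ν : V → ℝ≥0∞) : Prop := ∑ x, ν x = 1

/-- Probability that the `K`-walk currently at `x` next follows the trajectory `xs`
and is then killed. -/
noncomputable def pathProb (K : V → V → ℝ≥0∞) : V → List V → ℝ≥0∞
  | x, [] => 1 - ∑ y, K x y
  | x, y :: ys => K x y * pathProb K y ys

/-- Probability that a `(K,ν)`-walk has the (finite) full trajectory `w`. -/
noncomputable def walkProb (K : V → V → ℝ≥0∞) (ν : V → ℝ≥0∞) : List V → ℝ≥0∞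
  | [] => 0
  | x :: xs => ν x * pathProb K x xs

/-- `p(x)`: the probability that a `(K,ν)`-walk visits `x` before dying. -/
noncomputable def hitProb (K : V → V → ℝ≥0∞) (ν : V → ℝ≥0∞) (x : V) : ℝ≥0∞ :=
  ∑' w : List V, if x ∈ w then walkProb K ν w else 0

/-- The insertion law `ν` is admissible when every site has a chance of being
visited by a `(K,ν)`-walk. -/
def Admissible (K : V → V → ℝ≥0∞) (ν : V → ℝ≥0∞) : Prop := ∀ x, 0 < hitProb K ν x

/-- The uniform law on `V`. -/
noncomputable def unifLaw (V : Type) [Fintype V] : V → ℝ≥0∞ :=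
  fun _ => (Fintype.card V : ℝ≥0∞)⁻¹

/-! ### IDLA -/

/-- The IDLA update: the walker settles at the first site of its trajectory
which is not already occupied. -/
def idlaUpdate (S : Finset V) : List V → Finset V
  | [] => S
  | x :: xs => if x ∈ S then idlaUpdate S xs else insert x S

/-- The IDLA aggregate obtained from the initial set `A` after using the walks `ws`. -/
def idlaSet (A : Finset V) (ws : List (List V)) : Finset V := ws.foldl idlaUpdate A

/-- `P(T^A > t)`: probability that the IDLA process started from `A` and driven by
i.i.d. `(K,ν)`-walks has not filled `V` after `t` steps. -/
noncomputable def idlaTail (K : V → V → ℝ≥0∞) (ν : V → ℝ≥0∞) (A : Finset V) (t : ℕ) : ℝ≥0∞ :=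
  ∑' ws : Fin t → List V,
    (∏ i, walkProb K ν (ws i)) * (if idlaSet A (List.ofFn ws) = Finset.univ then 0 else 1)

/-- `E[T^A]`: the expected filling time of IDLA started from `A`. -/
noncomputable def idlaMean (K : V → V → ℝ≥0∞) (ν : V → ℝ≥0∞) (A : Finset V) : ℝ≥0∞ :=
  ∑' t : ℕ, idlaTail K ν A t

/-- `Var(T^A)`: the variance of the filling time of IDLA started from `A`. -/
noncomputable def idlaVar (K : V → V → ℝ≥0∞) (ν : V → ℝ≥0∞) (A : Finset V) : ℝ≥0∞ :=
  (∑' t : ℕ, (2 * t + 1) * idlaTail K ν A t) - (idlaMean K ν A) ^ 2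

/-! ### The ARW chain -/

/-- The state of a single site: empty, one sleeping particle, or `n+1` active particles. -/
inductive Site : Type
  | empty : Site
  | sleeping : Site
  | active (n : ℕ) : Site
deriving DecidableEq

/-- A configuration of particles. -/
abbrev Conf (V : Type) := V → Site

def Site.isActive : Site → Bool
  | .active _ => true
  | _ => false

/-- The set of sites holding at least one active particle. -/
def activeSites (η : Conf V) : Finset V := Finset.univ.filter fun x => (η x).isActive

/-- Adding one active particle to a site (waking a sleeping particle if present). -/
def Site.addActive : Site → Site
  | .empty => .active 0
  | .sleeping => .active 1
  | .active n => .active (n + 1)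

/-- Removing one active particle from a site. -/
def Site.removeOne : Site → Site
  | .active (n + 1) => .active n
  | _ => .empty

/-- Adding one active particle at site `y`. -/
def addActiveAt (η : Conf V) (y : V) : Conf V := Function.update η y (η y).addActive

/-- One sequential toppling step of ARW stabilization with sleep rate `lam`:
an active site `x` is selected (if any); if its particle is alone it falls asleep
with probability `lam/(1+lam)`, moves to `y` with probability `K x y/(1+lam)` and
dies with the remaining probability; if it is not alone it moves to `y` with
probability `K x y` and dies with the remaining probability.  Stable
configurations are absorbing. -/
noncomputable def toppleKernel (K : V → V → ℝ≥0∞) (lam : ℝ) (η ξ : Conf V) : ℝ≥0∞ :=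
  if h : (activeSites η).Nonempty then
    let x := h.choose
    let ημ : Conf V := Function.update η x (η x).removeOne
    let move : ℝ≥0∞ := ∑ y, if ξ = addActiveAt ημ y then K x y else 0
    let die : ℝ≥0∞ := if ξ = ημ then 1 - ∑ y, K x y else 0
    if η x = Site.active 0 then
      ((if ξ = Function.update η x Site.sleeping then ENNReal.ofReal lam else 0) + move + die)
        / (ENNReal.ofReal lam + 1)
    else move + die
  else if ξ = η then 1 else 0

/-- Iterates of a sub-probability kernel on configurations. -/
noncomputable def kernelPow (M : Conf V → Conf V → ℝ≥0∞) : ℕ → Conf V → Conf V → ℝ≥0∞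
  | 0 => fun η ξ => if ξ = η then 1 else 0
  | t + 1 => fun η ξ => ∑' σ : Conf V, M η σ * kernelPow M t σ ξ

/-- A stable configuration, seen as a configuration (`true` = sleeping particle). -/
def embed (b : V → Bool) : Conf V := fun x => if b x then Site.sleeping else Site.empty

/-- One step of the `ARW(K,lam,ν)` chain: insert an active particle at a `ν`-distributed
site and stabilize; `arwStep K lam ν η ξ` is the probability of reaching the stable
configuration `ξ` from the stable configuration `η`. -/
noncomputable def arwStep (K : V → V → ℝ≥0∞) (lam : ℝ) (ν : V → ℝ≥0∞)
    (η ξ : V → Bool) : ℝ≥0∞ :=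
  ∑ x, ν x * ⨆ t, kernelPow (toppleKernel K lam) t (addActiveAt (embed η) x) (embed ξ)

/-- The transition matrix of the `ARW(K,lam,ν)` chain on stable configurations. -/
noncomputable def arwMatrix (K : V → V → ℝ≥0∞) (lam : ℝ) (ν : V → ℝ≥0∞) :
    Matrix (V → Bool) (V → Bool) ℝ :=
  Matrix.of fun η ξ => (arwStep K lam ν η ξ).toReal

/-! ### Distances to equilibrium, mixing and relaxation times -/

variable {S : Type} [Fintype S] [DecidableEq S]

/-- `π` is a stationary probability distribution for `P`. -/
def IsStationary (P : Matrix S S ℝ) (π : S → ℝ) : Prop :=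
  (∀ s, 0 ≤ π s) ∧ (∑ s, π s = 1) ∧ ∀ s, ∑ r, π r * P r s = π s

/-- The separation distance to equilibrium at time `t`. -/
noncomputable def sepDist (P : Matrix S S ℝ) (π : S → ℝ) (t : ℕ) : ℝ :=
  ⨆ η, ⨆ ξ, (1 - (P ^ t) η ξ / π ξ)

/-- The separation mixing time with precision `ε`. -/
noncomputable def sepMix (P : Matrix S S ℝ) (π : S → ℝ) (ε : ℝ) : ℕ :=
  sInf {t : ℕ | sepDist P π t ≤ ε}

/-- The total-variation distance to equilibrium at time `t`. -/
noncomputable def tvDist (P : Matrix S S ℝ) (π : S → ℝ) (t : ℕ) : ℝ :=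
  ⨆ η, ⨆ A : Finset S, |∑ ξ ∈ A, ((P ^ t) η ξ - π ξ)|

/-- The total-variation mixing time with precision `ε`. -/
noncomputable def tvMix (P : Matrix S S ℝ) (π : S → ℝ) (ε : ℝ) : ℕ :=
  sInf {t : ℕ | tvDist P π t ≤ ε}

/-- The relaxation time `1/(1-ρ)`, where `ρ` is the largest modulus of the
(complex) eigenvalues of `P` other than `1`. -/
noncomputable def relTime (P : Matrix S S ℝ) : ℝ :=
  (1 - sSup {r : ℝ | ∃ z : ℂ,
      z ≠ 1 ∧ (P.map (fun a : ℝ => (a : ℂ))).charpoly.IsRoot z ∧ r = ‖z‖})⁻¹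

/-- Separation (or total-variation) cutoff for a sequence of chains with distance
functions `d n` and mixing times `ts n`. -/
def HasCutoff (d : ℕ → ℕ → ℝ) (ts : ℕ → ℕ) : Prop :=
  ∀ α : ℝ, 0 ≤ α →
    (α < 1 → Tendsto (fun n => d n ⌊α * (ts n : ℝ)⌋₊) atTop (nhds 1)) ∧
    (1 < α → Tendsto (fun n => d n ⌊α * (ts n : ℝ)⌋₊) atTop (nhds 0))

end ARW
namespace ARW

/-- `P_A(T > t)` where `T` is the hitting time of the target state `z` by the
Markov chain with transition kernel `M` started at `A`. -/
noncomputable def hitTail {S : Type} [Fintype S] [DecidableEq S]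
    (M : S → S → ℝ≥0∞) (z : S) : S → ℕ → ℝ≥0∞
  | A, 0 => if A = z then 0 else 1
  | A, t + 1 => if A = z then 0 else ∑ B, M A B * hitTail M z B t

/-- `E_A[T]`, the expected hitting time of `z` started from `A`. -/
noncomputable def hitMean {S : Type} [Fintype S] [DecidableEq S]
    (M : S → S → ℝ≥0∞) (z : S) (A : S) : ℝ≥0∞ :=
  ∑' t : ℕ, hitTail M z A t

/-- `Var_A(T)`, the variance of the hitting time of `z` started from `A`. -/
noncomputable def hitVar {S : Type} [Fintype S] [DecidableEq S]
    (M : S → S → ℝ≥0∞) (z : S) (A : S) : ℝ≥0∞ :=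
  (∑' t : ℕ, (2 * t + 1) * hitTail M z A t) - (hitMean M z A) ^ 2

/-- The law of a sum of `m` independent Bernoulli random variables with
parameters `p i`, as a measure on `ℝ`. -/
noncomputable def bernoulliSumLaw {m : ℕ} (p : Fin m → ℝ≥0∞) : MeasureTheory.Measure ℝ :=
  ∑ b : Fin m → Bool,
    (∏ i, if b i then p i else 1 - p i) •
      MeasureTheory.Measure.dirac (∑ i, if b i then (1 : ℝ) else 0)

end ARW
namespace ARW

open MeasureTheory

/-!
On `{V ≤ U}` we have `1 ≤ e^{θU} e^{-θV}` for `θ ≥ 0`, so Markov's inequality and Cauchy–Schwarz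
bound `P(V ≤ U)` by `(E e^{2θU} · E e^{-2θV})^{1/2}`, whatever the coupling of `U` and `V`.
A sum `S` of independent Bernoulli variables has `E e^{cS} ≤ exp((e^c - 1) E S)`, so with
`t = e^{2θ}`, `a² = E U` and `b² = E V` the bound becomes `exp(((t - 1) a² + (t⁻¹ - 1) b²) / 2)`.
For `a > 0` the choice `t = b / a` gives `exp(-(b - a)² / 2)`; for `a = 0` the choice
`t = (1 + √2)²` gives exactly `exp(-b² / (1 + √2))`.
-/

open Real

lemma lintegral_exp_mul_bernoulliSumLaw {m : ℕ} (p : Fin m → ℝ≥0∞) (c : ℝ) :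
    ∫⁻ x, ENNReal.ofReal (exp (c * x)) ∂(bernoulliSumLaw p)
      = ∏ i, (1 - p i + p i * ENNReal.ofReal (exp c)) := by
  have hterm (b : Fin m → Bool) :
      (∏ i, if b i then p i else 1 - p i) *
          ENNReal.ofReal (exp (c * ∑ i, if b i then (1 : ℝ) else 0))
        = ∏ i, if b i then p i * ENNReal.ofReal (exp c) else 1 - p i := by
    rw [Finset.mul_sum, exp_sum, ENNReal.ofReal_prod_of_nonneg fun i _ => (exp_pos _).le,
      ← Finset.prod_mul_distrib]
    refine Finset.prod_congr rfl fun i _ => ?_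
    cases b i <;> simp
  simp only [bernoulliSumLaw, lintegral_finsetSum_measure, lintegral_smul_measure,
    lintegral_dirac, smul_eq_mul, hterm]
  rw [← Fintype.prod_sum fun i (t : Bool) => if t then p i * ENNReal.ofReal (exp c) else 1 - p i]
  simp [add_comm]

lemma one_sub_add_mul_ofReal_exp_le {r : ℝ≥0∞} (hr : r ≤ 1) (c : ℝ) :
    1 - r + r * ENNReal.ofReal (exp c) ≤ ENNReal.ofReal (exp ((exp c - 1) * r.toReal)) := by
  lift r to NNReal using ne_top_of_le_ne_top ENNReal.one_ne_top hr
  have hr1 : (r : ℝ) ≤ 1 := by exact_mod_cast hr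
  rw [ENNReal.coe_toReal, ← ENNReal.ofReal_coe_nnreal, ← ENNReal.ofReal_one,
    ← ENNReal.ofReal_sub _ r.coe_nonneg, ← ENNReal.ofReal_mul r.coe_nonneg,
    ← ENNReal.ofReal_add (by linarith) (by positivity)]
  refine ENNReal.ofReal_le_ofReal ?_
  linarith [add_one_le_exp ((exp c - 1) * r)]

lemma lintegral_exp_mul_bernoulliSumLaw_le {m : ℕ} {p : Fin m → ℝ≥0∞} (hp : ∀ i, p i ≤ 1)
    (c : ℝ) :
    ∫⁻ x, ENNReal.ofReal (exp (c * x)) ∂(bernoulliSumLaw p)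
      ≤ ENNReal.ofReal (exp ((exp c - 1) * (∑ i, p i).toReal)) := by
  have hp_top (i : Fin m) : p i ≠ ⊤ := ne_top_of_le_ne_top ENNReal.one_ne_top (hp i)
  calc ∫⁻ x, ENNReal.ofReal (exp (c * x)) ∂(bernoulliSumLaw p)
      = ∏ i, (1 - p i + p i * ENNReal.ofReal (exp c)) := lintegral_exp_mul_bernoulliSumLaw p c
    _ ≤ ∏ i, ENNReal.ofReal (exp ((exp c - 1) * (p i).toReal)) :=
        Finset.prod_le_prod' fun i _ => one_sub_add_mul_ofReal_exp_le (hp i) c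
    _ = ENNReal.ofReal (exp ((exp c - 1) * (∑ i, p i).toReal)) := by
        rw [← ENNReal.ofReal_prod_of_nonneg fun i _ => (exp_pos _).le, ← exp_sum,
          ← Finset.mul_sum, ENNReal.toReal_sum fun i _ => hp_top i]

lemma lintegral_exp_mul_le_of_map_eq_bernoulliSumLaw {Ω : Type} [MeasurableSpace Ω]
    {μ : Measure Ω} {U : Ω → ℝ} (hUm : Measurable U) {m : ℕ} {p : Fin m → ℝ≥0∞}
    (hp : ∀ i, p i ≤ 1) (hU : μ.map U = bernoulliSumLaw p) (c : ℝ) :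
    ∫⁻ ω, ENNReal.ofReal (exp (c * U ω)) ∂μ
      ≤ ENNReal.ofReal (exp ((exp c - 1) * (∑ i, p i).toReal)) := by
  rw [← lintegral_map (f := fun x => ENNReal.ofReal (exp (c * x))) (by fun_prop) hUm, hU]
  exact lintegral_exp_mul_bernoulliSumLaw_le hp c

lemma measure_le_le_lintegral_exp_mul_exp {Ω : Type} [MeasurableSpace Ω] (μ : Measure Ω)
    {U V : Ω → ℝ} (hUm : Measurable U) (hVm : Measurable V) {θ : ℝ} (hθ : 0 ≤ θ) :
    μ {ω | V ω ≤ U ω}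
      ≤ ∫⁻ ω, ENNReal.ofReal (exp (θ * U ω)) * ENNReal.ofReal (exp (-θ * V ω)) ∂μ := by
  have hmarkov := mul_meas_ge_le_lintegral₀ (μ := μ)
    (f := fun ω => ENNReal.ofReal (exp (θ * U ω)) * ENNReal.ofReal (exp (-θ * V ω)))
    (by fun_prop) 1
  refine le_trans (measure_mono fun ω (hω : V ω ≤ U ω) => ?_) ((one_mul _).symm.trans_le hmarkov)
  show (1 : ℝ≥0∞) ≤ _
  rw [← ENNReal.ofReal_mul (exp_pos _).le, ← exp_add, ← ENNReal.ofReal_one]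
  exact ENNReal.ofReal_le_ofReal (one_le_exp (by nlinarith))

lemma measure_le_le_of_map_eq_bernoulliSumLaw {Ω : Type} [MeasurableSpace Ω] (μ : Measure Ω)
    {U V : Ω → ℝ} (hUm : Measurable U) (hVm : Measurable V)
    {m₁ m₂ : ℕ} {p : Fin m₁ → ℝ≥0∞} {q : Fin m₂ → ℝ≥0∞}
    (hp : ∀ i, p i ≤ 1) (hq : ∀ i, q i ≤ 1)
    (hU : μ.map U = bernoulliSumLaw p) (hV : μ.map V = bernoulliSumLaw q) {c : ℝ} (hc : 0 ≤ c) :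
    μ {ω | V ω ≤ U ω} ≤ ENNReal.ofReal (exp
      (((exp c - 1) * (∑ i, p i).toReal + (exp (-c) - 1) * (∑ i, q i).toReal) / 2)) := by
  have hsq (a x : ℝ) :
      ENNReal.ofReal (exp (a / 2 * x)) ^ (2 : ℝ) = ENNReal.ofReal (exp (a * x)) := by
    rw [ENNReal.ofReal_rpow_of_pos (exp_pos _), ← exp_mul]
    ring_nf
  calc μ {ω | V ω ≤ U ω}
      ≤ ∫⁻ ω, ENNReal.ofReal (exp (c / 2 * U ω)) * ENNReal.ofReal (exp (-c / 2 * V ω)) ∂μ := by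
        simpa only [neg_div] using measure_le_le_lintegral_exp_mul_exp μ hUm hVm (by positivity)
    _ ≤ (∫⁻ ω, ENNReal.ofReal (exp (c / 2 * U ω)) ^ (2 : ℝ) ∂μ) ^ (1 / (2 : ℝ))
        * (∫⁻ ω, ENNReal.ofReal (exp (-c / 2 * V ω)) ^ (2 : ℝ) ∂μ) ^ (1 / (2 : ℝ)) :=
        ENNReal.lintegral_mul_le_Lp_mul_Lq μ Real.HolderConjugate.two_two (by fun_prop)
          (by fun_prop)
    _ ≤ (ENNReal.ofReal (exp ((exp c - 1) * (∑ i, p i).toReal))) ^ (1 / (2 : ℝ))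
        * (ENNReal.ofReal (exp ((exp (-c) - 1) * (∑ i, q i).toReal))) ^ (1 / (2 : ℝ)) := by
        simp only [hsq]
        gcongr
        · exact lintegral_exp_mul_le_of_map_eq_bernoulliSumLaw hUm hp hU c
        · exact lintegral_exp_mul_le_of_map_eq_bernoulliSumLaw hVm hq hV (-c)
    _ = _ := by
        rw [ENNReal.ofReal_rpow_of_pos (exp_pos _), ENNReal.ofReal_rpow_of_pos (exp_pos _),
          ← exp_mul, ← exp_mul, ← ENNReal.ofReal_mul (exp_pos _).le, ← exp_add]
        ring_nf

lemma exists_one_le_tilt_bound {a b : ℝ} (ha : 0 ≤ a) (hab : a ≤ b) :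
    ∃ t, 1 ≤ t ∧ ((t - 1) * a ^ 2 + (t⁻¹ - 1) * b ^ 2) / 2 ≤ -((b - a) ^ 2 / (1 + √2)) := by
  have hsqrt2 : √2 ^ 2 = 2 := sq_sqrt zero_le_two
  have hone_le : 1 ≤ √2 := one_le_sqrt.2 one_le_two
  rcases ha.eq_or_lt with rfl | ha
  · -- `(1 + √2)⁻¹ = √2 - 1` makes this choice exact.
    refine ⟨(1 + √2) ^ 2, by nlinarith, le_of_eq ?_⟩
    field_simp
    nlinarith
  · refine ⟨b / a, (one_le_div ha).2 hab, ?_⟩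
    have hb : 0 < b := ha.trans_le hab
    have hhalf : ((b / a - 1) * a ^ 2 + ((b / a)⁻¹ - 1) * b ^ 2) / 2 = -((b - a) ^ 2 / 2) := by
      field_simp
      ring
    rw [hhalf, neg_le_neg_iff]
    exact div_le_div_of_nonneg_left (sq_nonneg _) zero_lt_two (by linarith)

theorem bernoulli_sums_unexpected_win_general
    {Ω : Type} [MeasurableSpace Ω] (μ : Measure Ω)
    (U V : Ω → ℝ) (hUm : Measurable U) (hVm : Measurable V)
    {m₁ m₂ : ℕ} (p : Fin m₁ → ℝ≥0∞) (q : Fin m₂ → ℝ≥0∞)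
    (hp : ∀ i, p i ≤ 1) (hq : ∀ i, q i ≤ 1)
    (hU : μ.map U = bernoulliSumLaw p)
    (hV : μ.map V = bernoulliSumLaw q)
    (hmean : ∑ i, p i ≤ ∑ i, q i) :
    μ {ω | V ω ≤ U ω}
      ≤ ENNReal.ofReal (2 * Real.exp
          (-((Real.sqrt (∑ i, q i).toReal - Real.sqrt (∑ i, p i).toReal) ^ 2
              / (1 + Real.sqrt 2)))) := by
  have hq_top : ∑ i, q i ≠ ⊤ :=
    ENNReal.sum_ne_top.2 fun i _ => ne_top_of_le_ne_top ENNReal.one_ne_top (hq i)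
  have hsqrt_le : √(∑ i, p i).toReal ≤ √(∑ i, q i).toReal :=
    sqrt_le_sqrt (ENNReal.toReal_mono hq_top hmean)
  obtain ⟨t, ht, hbound⟩ := exists_one_le_tilt_bound (sqrt_nonneg _) hsqrt_le
  rw [sq_sqrt ENNReal.toReal_nonneg, sq_sqrt ENNReal.toReal_nonneg] at hbound
  have hchernoff := measure_le_le_of_map_eq_bernoulliSumLaw μ hUm hVm hp hq hU hV (log_nonneg ht)
  rw [exp_neg, exp_log (by linarith)] at hchernoff
  refine hchernoff.trans (ENNReal.ofReal_le_ofReal ((exp_le_exp.2 hbound).trans ?_))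
  exact le_mul_of_one_le_left (exp_pos _).le one_le_two

/-- **Lemma (Probability of an unexpected win).**  Let `U` and `V` be jointly defined
random variables, each marginally distributed as a sum of independent Bernoulli
variables (with parameters `p` and `q` respectively), with `E[U] ≤ E[V]`.  Then
`P(V ≤ U) ≤ 2 exp(−(√E[V] − √E[U])² / (1+√2))`. -/
theorem bernoulli_sums_unexpected_win
    {Ω : Type} [MeasurableSpace Ω] (μ : Measure Ω) [IsProbabilityMeasure μ]
    (U V : Ω → ℝ) (hUm : Measurable U) (hVm : Measurable V)
    {m₁ m₂ : ℕ} (p : Fin m₁ → ℝ≥0∞) (q : Fin m₂ → ℝ≥0∞)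
    (hp : ∀ i, p i ≤ 1) (hq : ∀ i, q i ≤ 1)
    (hU : μ.map U = bernoulliSumLaw p)
    (hV : μ.map V = bernoulliSumLaw q)
    (hmean : ∑ i, p i ≤ ∑ i, q i) :
    μ {ω | V ω ≤ U ω}
      ≤ ENNReal.ofReal (2 * Real.exp
          (-((Real.sqrt (∑ i, q i).toReal - Real.sqrt (∑ i, p i).toReal) ^ 2
              / (1 + Real.sqrt 2)))) :=
  bernoulli_sums_unexpected_win_general μ U V hUm hVm p q hp hq hU hV hmean

end ARW
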